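/- Let θ ∈ (0,1], χ > 0, λ > 0, 1 < γ < 2 and C > 0. Define φ(t) = C χ (θ/((γ−1) t)) · λ t^θ (1 + λ t^θ)^{−γ/(γ−1)} · exp( −χ (1 + λ t^θ)^{1/(1−γ)} ) for t > 0, and set ϱ = θ/(γ−1) and ξ = C χ ϱ λ^{1/(1−γ)}. Then φ(t) is asymptotically equivalent to ξ t^{−ϱ−1} as t → +∞, i.e. φ(t)·t^{ϱ+1} → ξ as t → ∞. -/

import Mathlib

/-!
Substituting `u = λ t^θ`, so that `t^ϱ = (u/λ)^{1/(γ-1)}`, turns `φ(t) t^{ϱ+1}` exactly into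
`ξ · (u/(1+u))^{γ/(γ-1)} · exp(-χ (1+u)^{1/(1-γ)})`. As `t → ∞` also `u → ∞`, and since
`1/(1-γ) < 0` both factors after `ξ` tend to `1`.
-/

open Filter Real
open scoped Topology

lemma tendsto_div_one_add_atTop_nhds_one :
    Tendsto (fun u : ℝ => u / (1 + u)) atTop (𝓝 1) := by
  have h : Tendsto (fun u : ℝ => 1 - (1 + u)⁻¹) atTop (𝓝 (1 - 0)) :=
    tendsto_const_nhds.sub
      (tendsto_inv_atTop_zero.comp (tendsto_atTop_add_const_left _ 1 tendsto_id))
  rw [sub_zero] at h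
  refine h.congr' ?_
  filter_upwards [eventually_gt_atTop 0] with u hu
  field_simp
  ring

lemma tendsto_one_add_rpow_atTop_nhds_zero {s : ℝ} (hs : s < 0) :
    Tendsto (fun u : ℝ => (1 + u) ^ s) atTop (𝓝 0) := by
  simpa [Function.comp_def] using
    (tendsto_rpow_neg_atTop (neg_pos.mpr hs)).comp (tendsto_atTop_add_const_left _ 1 tendsto_id)

lemma tendsto_div_one_add_rpow_mul_exp_atTop (r c : ℝ) {s : ℝ} (hs : s < 0) :
    Tendsto (fun u : ℝ => (u / (1 + u)) ^ r * exp (c * (1 + u) ^ s)) atTop (𝓝 1) := by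
  have hpow := tendsto_div_one_add_atTop_nhds_one.rpow_const (p := r) (Or.inl one_ne_zero)
  have hexp := ((tendsto_one_add_rpow_atTop_nhds_zero hs).const_mul c).rexp
  simpa using hpow.mul hexp

lemma mul_one_add_rpow_mul_div_rpow {u lam : ℝ} (hu : 0 < u) (hlam : 0 < lam) (β : ℝ) :
    u * (1 + u) ^ (-(1 + β)) * (u / lam) ^ β = lam ^ (-β) * (u / (1 + u)) ^ (1 + β) := by
  have h1u : 0 < 1 + u := by linarith
  rw [div_rpow hu.le h1u.le, div_rpow hu.le hlam.le, rpow_neg h1u.le, rpow_neg hlam.le,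
    rpow_add hu, rpow_one]
  field_simp

noncomputable def criticalClusterDurationDensity (θ χ lam γ C t : ℝ) : ℝ :=
  C * χ * (θ / ((γ - 1) * t)) * (lam * t ^ θ) * (1 + lam * t ^ θ) ^ (-γ / (γ - 1))
    * exp (-χ * (1 + lam * t ^ θ) ^ (1 / (1 - γ)))

lemma criticalClusterDurationDensity_mul_rpow {θ χ lam γ C t : ℝ} (ht : 0 < t)
    (hlam : 0 < lam) (hγ : 1 < γ) :
    criticalClusterDurationDensity θ χ lam γ C t * t ^ (θ / (γ - 1) + 1) =
      C * χ * (θ / (γ - 1)) * lam ^ (1 / (1 - γ)) *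
        ((lam * t ^ θ / (1 + lam * t ^ θ)) ^ (γ / (γ - 1))
          * exp (-χ * (1 + lam * t ^ θ) ^ (1 / (1 - γ)))) := by
  set β := 1 / (γ - 1) with hβ
  set u := lam * t ^ θ with hu_def
  have hγ₁ : γ - 1 ≠ 0 := by linarith
  have hγ₂ : 1 - γ ≠ 0 := by linarith
  have hu : 0 < u := by positivity
  have htθ : t ^ θ = u / lam := by rw [hu_def]; field_simp
  have hpow : t ^ (θ / (γ - 1) + 1) = (u / lam) ^ β * t := by
    rw [rpow_add_one ht.ne', ← htθ, ← rpow_mul ht.le, hβ, mul_one_div]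
  have hexp₁ : -γ / (γ - 1) = -(1 + β) := by rw [hβ]; field_simp; ring
  have hexp₂ : 1 / (1 - γ) = -β := by rw [hβ]; field_simp; ring
  have hexp₃ : γ / (γ - 1) = 1 + β := by rw [hβ]; field_simp; ring
  unfold criticalClusterDurationDensity
  rw [hpow, hexp₁, hexp₂, hexp₃, ← hu_def]
  calc C * χ * (θ / ((γ - 1) * t)) * u * (1 + u) ^ (-(1 + β)) * exp (-χ * (1 + u) ^ (-β))
        * ((u / lam) ^ β * t)
      = C * χ * (θ / (γ - 1)) * (u * (1 + u) ^ (-(1 + β)) * (u / lam) ^ β)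
          * exp (-χ * (1 + u) ^ (-β)) := by
        field_simp
    _ = _ := by rw [mul_one_add_rpow_mul_div_rpow hu hlam β]; ring

theorem critical_cluster_duration_pdf_tail
    (θ χ lam γ C : ℝ) (hθ : θ ∈ Set.Ioc (0 : ℝ) 1) (hlam : 0 < lam)
    (hγ : 1 < γ)
    (φ : ℝ → ℝ)
    (hφ : ∀ t > (0 : ℝ),
      φ t = C * χ * (θ / ((γ - 1) * t)) * (lam * t ^ θ)
        * (1 + lam * t ^ θ) ^ (-γ / (γ - 1))
        * Real.exp (-χ * (1 + lam * t ^ θ) ^ (1 / (1 - γ))))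
    (ϱ ξ : ℝ) (hϱ : ϱ = θ / (γ - 1)) (hξ : ξ = C * χ * ϱ * lam ^ (1 / (1 - γ))) :
    Tendsto (fun t => φ t * t ^ (ϱ + 1)) atTop (nhds ξ) := by
  subst hϱ hξ
  have hu : Tendsto (fun t : ℝ => lam * t ^ θ) atTop atTop :=
    (tendsto_rpow_atTop hθ.1).const_mul_atTop hlam
  have hs : 1 / (1 - γ) < 0 := one_div_neg.mpr (by linarith)
  have hlim := ((tendsto_div_one_add_rpow_mul_exp_atTop (γ / (γ - 1)) (-χ) hs).comp hu).const_mul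
    (C * χ * (θ / (γ - 1)) * lam ^ (1 / (1 - γ)))
  rw [mul_one] at hlim
  refine hlim.congr' ?_
  filter_upwards [eventually_gt_atTop 0] with t ht
  rw [hφ t ht]
  exact (criticalClusterDurationDensity_mul_rpow ht hlam hγ).symm
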